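/- In a commutative idempotent involutive residuated lattice, for a negative element a (a ≤ 1): a ≤ 0 if and only if for all x, a·x = a implies a·¬x = a. -/

import Mathlib

/-- A commutative idempotent involutive residuated lattice. -/
class CIdInRL (α : Type*) extends Lattice α, CommMonoid α, Zero α where
  arrow : α → α → α
  residuation : ∀ x y z : α, x * y ≤ z ↔ y ≤ arrow x z
  idem : ∀ x : α, x * x = x
  involutive : ∀ x : α, arrow (arrow x 0) 0 = x

namespace CIdInRL
variable {α : Type*} [CIdInRL α]
/-- linear negation ¬x := x → 0 -/
def neg (x : α) : α := arrow x 0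
/-- 0_x := x ∧ ¬x -/
def zx (x : α) : α := x ⊓ neg x
/-- 1_x := x ∨ ¬x -/
def ox (x : α) : α := x ⊔ neg x
/-- monoidal order x ⊑ y iff x·y = x -/
def mleq (x y : α) : Prop := x * y = x
end CIdInRL

/-!
If `a ≤ 0` and `a * x = a`, then `a * x ≤ 0` gives `a ≤ ¬x`, whence `a = a * a ≤ a * ¬x`; and
`a ≤ 1` gives `a ≤ x`, so `¬x ≤ ¬a`, idempotence gives `¬x * ¬a ≤ ¬a`, and contraposition turns
this into `¬x * a ≤ a`. Conversely, `x = 1` yields `a * 0 = a`, and `a * 0 ≤ 0` because `a ≤ 1`.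
-/

namespace CIdInRL
variable {α : Type*} [CIdInRL α]

instance : IsOrderedMonoid α where
  mul_le_mul_left y z h x := by
    rw [mul_comm y, mul_comm z]
    exact (residuation x y (x * z)).mpr (h.trans ((residuation x z (x * z)).mp le_rfl))

theorem le_neg_iff_mul_le_zero {x y : α} : y ≤ neg x ↔ x * y ≤ 0 :=
  (residuation x y 0).symm

theorem mul_neg_le_zero (x : α) : x * neg x ≤ 0 :=
  le_neg_iff_mul_le_zero.mp le_rfl

protected theorem neg_neg (x : α) : neg (neg x) = x :=
  involutive x

theorem neg_antitone : Antitone (neg : α → α) := fun _ y h =>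
  le_neg_iff_mul_le_zero.mpr ((mul_le_mul_left h (neg y)).trans (mul_neg_le_zero y))

theorem neg_one : neg (1 : α) = 0 :=
  le_antisymm (by simpa only [one_mul] using mul_neg_le_zero (1 : α))
    (le_neg_iff_mul_le_zero.mpr (one_mul (0 : α)).le)

/-- Contraposition: both sides say `x * y * neg z ≤ 0`. -/
theorem mul_le_iff_mul_neg_le {x y z : α} : x * y ≤ z ↔ x * neg z ≤ neg y := by
  conv_lhs => rw [← CIdInRL.neg_neg z]
  rw [le_neg_iff_mul_le_zero, le_neg_iff_mul_le_zero,
    show neg z * (x * y) = y * (x * neg z) by ac_rfl]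

theorem mul_le_of_le {x y : α} (h : x ≤ y) : x * y ≤ y :=
  calc x * y ≤ y * y := mul_le_mul_left h y
    _ = y := idem y

end CIdInRL

open CIdInRL in
theorem stmt12 {α : Type*} [CIdInRL α] (a : α) (ha : a ≤ 1) :
    a ≤ 0 ↔ ∀ x : α, a * x = a → a * neg x = a := by
  constructor
  · intro ha0 x hax
    have ha_le_x : a ≤ x := hax ▸ mul_le_of_le_one_left' ha
    have ha_le_neg_x : a ≤ neg x := le_neg_iff_mul_le_zero.mpr (by rwa [mul_comm, hax])
    apply le_antisymm
    · rw [mul_comm, mul_le_iff_mul_neg_le]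
      exact mul_le_of_le (neg_antitone ha_le_x)
    · calc a = a * a := (idem a).symm
        _ ≤ a * neg x := mul_le_mul_right ha_le_neg_x a
  · intro h
    calc a = a * 0 := by rw [← neg_one, h 1 (mul_one a)]
      _ ≤ 0 := mul_le_of_le_one_left' ha
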